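/- Let 𝔸_μ : ℝ⁴ → M₂(ℂ), μ = 0,...,7, be smooth, regarded as a connection on ℝ⁸ = ℝ⁴ × ℝ⁴ invariant under translations in the last four coordinates, so that 𝔽_{μν} = ∂_μ 𝔸_ν − ∂_ν 𝔸_μ + [𝔸_μ, 𝔸_ν], where ∂_μ = 0 for μ ≥ 4 and ∂_a for a = 0,1,2,3 are the partial derivatives on ℝ⁴. Set A_a = 𝔸_a (a=0,...,3), Φ₀ = 𝔸₄, Φ₁ = −𝔸₅, Φ₂ = −𝔸₆, Φ₃ = 𝔸₇, F_{ab} = ∂_a A_b − ∂_b A_a + [A_a,A_b], and D_a Φ_b = ∂_a Φ_b + [A_a, Φ_b]. Then the seven Spin(7) self-duality equations 𝔽_{01}+𝔽_{23}+𝔽_{45}+𝔽_{67}=0, 𝔽_{02}−𝔽_{13}+𝔽_{46}−𝔽_{57}=0, 𝔽_{03}+𝔽_{12}−𝔽_{47}−𝔽_{56}=0, 𝔽_{05}+𝔽_{14}+𝔽_{27}+𝔽_{36}=0, 𝔽_{06}−𝔽_{17}+𝔽_{24}−𝔽_{35}=0, 𝔽_{07}+𝔽_{16}−𝔽_{25}−𝔽_{34}=0,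 𝔽_{04}−𝔽_{15}−𝔽_{26}+𝔽_{37}=0 hold identically on ℝ⁴ if and only if the following non-abelian Seiberg–Witten system holds: F₀₁+F₂₃ = [Φ₀,Φ₁]+[Φ₂,Φ₃], F₀₂−F₁₃ = [Φ₀,Φ₂]−[Φ₁,Φ₃], F₀₃+F₁₂ = [Φ₀,Φ₃]+[Φ₁,Φ₂], −D₀Φ₁+D₁Φ₀+D₂Φ₃−D₃Φ₂ = 0, −D₀Φ₂−D₁Φ₃+D₂Φ₀+D₃Φ₁ = 0, D₀Φ₃−D₁Φ₂+D₂Φ₁−D₃Φ₀ = 0, D₀Φ₀+D₁Φ₁+D₂Φ₂+D₃Φ₃ = 0. -/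

import Mathlib

attribute [local instance] Matrix.normedAddCommGroup Matrix.normedSpace

/-- Partial derivative on ℝ⁴ in the `a`-th coordinate direction. -/
noncomputable def pd4 (a : Fin 4)
    (f : EuclideanSpace ℝ (Fin 4) → Matrix (Fin 2) (Fin 2) ℂ)
    (x : EuclideanSpace ℝ (Fin 4)) : Matrix (Fin 2) (Fin 2) ℂ :=
  fderiv ℝ f x (EuclideanSpace.single a 1)

/-- Partial derivative `∂_μ`, `μ = 0,…,7`, for translation-invariant fields on
ℝ⁸ = ℝ⁴ × ℝ⁴: it is the `μ`-th coordinate derivative on the first ℝ⁴ factor for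
`μ < 4` and zero for `μ ≥ 4`. -/
noncomputable def pd8 (μ : Fin 8)
    (f : EuclideanSpace ℝ (Fin 4) → Matrix (Fin 2) (Fin 2) ℂ)
    (x : EuclideanSpace ℝ (Fin 4)) : Matrix (Fin 2) (Fin 2) ℂ :=
  if h : (μ : ℕ) < 4 then fderiv ℝ f x (EuclideanSpace.single ⟨(μ : ℕ), h⟩ 1) else 0

/-- Curvature `𝔽_{μν} = ∂_μ 𝔸_ν − ∂_ν 𝔸_μ + [𝔸_μ, 𝔸_ν]` of the translation-invariant
eight-dimensional connection. -/
noncomputable def curv8 (𝔸 : Fin 8 → EuclideanSpace ℝ (Fin 4) → Matrix (Fin 2) (Fin 2) ℂ)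
    (μ ν : Fin 8) (x : EuclideanSpace ℝ (Fin 4)) : Matrix (Fin 2) (Fin 2) ℂ :=
  pd8 μ (𝔸 ν) x - pd8 ν (𝔸 μ) x + (𝔸 μ x * 𝔸 ν x - 𝔸 ν x * 𝔸 μ x)

/-- The four-dimensional connection `A_a = 𝔸_a`. -/
noncomputable def Aconn (𝔸 : Fin 8 → EuclideanSpace ℝ (Fin 4) → Matrix (Fin 2) (Fin 2) ℂ)
    (a : Fin 4) : EuclideanSpace ℝ (Fin 4) → Matrix (Fin 2) (Fin 2) ℂ :=
  𝔸 (Fin.castLE (by norm_num) a)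

/-- The Higgs fields `Φ₀ = 𝔸₄, Φ₁ = −𝔸₅, Φ₂ = −𝔸₆, Φ₃ = 𝔸₇`. -/
noncomputable def Higgs (𝔸 : Fin 8 → EuclideanSpace ℝ (Fin 4) → Matrix (Fin 2) (Fin 2) ℂ) :
    Fin 4 → EuclideanSpace ℝ (Fin 4) → Matrix (Fin 2) (Fin 2) ℂ :=
  ![𝔸 4, fun x => -𝔸 5 x, fun x => -𝔸 6 x, 𝔸 7]

/-- The four-dimensional curvature `F_{ab} = ∂_a A_b − ∂_b A_a + [A_a, A_b]`. -/
noncomputable def F4 (𝔸 : Fin 8 → EuclideanSpace ℝ (Fin 4) → Matrix (Fin 2) (Fin 2) ℂ)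
    (a b : Fin 4) (x : EuclideanSpace ℝ (Fin 4)) : Matrix (Fin 2) (Fin 2) ℂ :=
  pd4 a (Aconn 𝔸 b) x - pd4 b (Aconn 𝔸 a) x
    + (Aconn 𝔸 a x * Aconn 𝔸 b x - Aconn 𝔸 b x * Aconn 𝔸 a x)

/-- The covariant derivative `D_a Φ_b = ∂_a Φ_b + [A_a, Φ_b]`. -/
noncomputable def DPhi (𝔸 : Fin 8 → EuclideanSpace ℝ (Fin 4) → Matrix (Fin 2) (Fin 2) ℂ)
    (a b : Fin 4) (x : EuclideanSpace ℝ (Fin 4)) : Matrix (Fin 2) (Fin 2) ℂ :=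
  pd4 a (Higgs 𝔸 b) x + (Aconn 𝔸 a x * Higgs 𝔸 b x - Higgs 𝔸 b x * Aconn 𝔸 a x)


section Helpers

variable (𝔸 : Fin 8 → EuclideanSpace ℝ (Fin 4) → Matrix (Fin 2) (Fin 2) ℂ)
  (f : EuclideanSpace ℝ (Fin 4) → Matrix (Fin 2) (Fin 2) ℂ) (x : EuclideanSpace ℝ (Fin 4))

lemma pd8_0 : pd8 0 f x = fderiv ℝ f x (EuclideanSpace.single 0 1) := rfl
lemma pd8_1 : pd8 1 f x = fderiv ℝ f x (EuclideanSpace.single 1 1) := rfl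
lemma pd8_2 : pd8 2 f x = fderiv ℝ f x (EuclideanSpace.single 2 1) := rfl
lemma pd8_3 : pd8 3 f x = fderiv ℝ f x (EuclideanSpace.single 3 1) := rfl
lemma pd8_4 : pd8 4 f x = 0 := dif_neg (by decide)
lemma pd8_5 : pd8 5 f x = 0 := dif_neg (by decide)
lemma pd8_6 : pd8 6 f x = 0 := dif_neg (by decide)
lemma pd8_7 : pd8 7 f x = 0 := dif_neg (by decide)

lemma aconn0 : Aconn 𝔸 0 = 𝔸 0 := rfl
lemma aconn1 : Aconn 𝔸 1 = 𝔸 1 := rfl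
lemma aconn2 : Aconn 𝔸 2 = 𝔸 2 := rfl
lemma aconn3 : Aconn 𝔸 3 = 𝔸 3 := rfl

lemma higgs0 : Higgs 𝔸 0 = 𝔸 4 := rfl
lemma higgs1 : Higgs 𝔸 1 = fun x => -𝔸 5 x := rfl
lemma higgs2 : Higgs 𝔸 2 = fun x => -𝔸 6 x := rfl
lemma higgs3 : Higgs 𝔸 3 = 𝔸 7 := rfl

lemma id1 : curv8 𝔸 0 1 x + curv8 𝔸 2 3 x + curv8 𝔸 4 5 x + curv8 𝔸 6 7 x
    = F4 𝔸 0 1 x + F4 𝔸 2 3 x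
      - ((Higgs 𝔸 0 x * Higgs 𝔸 1 x - Higgs 𝔸 1 x * Higgs 𝔸 0 x)
        + (Higgs 𝔸 2 x * Higgs 𝔸 3 x - Higgs 𝔸 3 x * Higgs 𝔸 2 x)) := by
  simp only [curv8, F4, pd4, pd8_0, pd8_1, pd8_2, pd8_3, pd8_4, pd8_5, pd8_6, pd8_7,
    aconn0, aconn1, aconn2, aconn3, higgs0, higgs1, higgs2, higgs3]
  noncomm_ring

lemma id2 : curv8 𝔸 0 2 x - curv8 𝔸 1 3 x + curv8 𝔸 4 6 x - curv8 𝔸 5 7 x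
    = F4 𝔸 0 2 x - F4 𝔸 1 3 x
      - ((Higgs 𝔸 0 x * Higgs 𝔸 2 x - Higgs 𝔸 2 x * Higgs 𝔸 0 x)
        - (Higgs 𝔸 1 x * Higgs 𝔸 3 x - Higgs 𝔸 3 x * Higgs 𝔸 1 x)) := by
  simp only [curv8, F4, pd4, pd8_0, pd8_1, pd8_2, pd8_3, pd8_4, pd8_5, pd8_6, pd8_7,
    aconn0, aconn1, aconn2, aconn3, higgs0, higgs1, higgs2, higgs3]
  noncomm_ring

lemma id3 : curv8 𝔸 0 3 x + curv8 𝔸 1 2 x - curv8 𝔸 4 7 x - curv8 𝔸 5 6 x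
    = F4 𝔸 0 3 x + F4 𝔸 1 2 x
      - ((Higgs 𝔸 0 x * Higgs 𝔸 3 x - Higgs 𝔸 3 x * Higgs 𝔸 0 x)
        + (Higgs 𝔸 1 x * Higgs 𝔸 2 x - Higgs 𝔸 2 x * Higgs 𝔸 1 x)) := by
  simp only [curv8, F4, pd4, pd8_0, pd8_1, pd8_2, pd8_3, pd8_4, pd8_5, pd8_6, pd8_7,
    aconn0, aconn1, aconn2, aconn3, higgs0, higgs1, higgs2, higgs3]
  noncomm_ring

lemma id4 : curv8 𝔸 0 5 x + curv8 𝔸 1 4 x + curv8 𝔸 2 7 x + curv8 𝔸 3 6 x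
    = -DPhi 𝔸 0 1 x + DPhi 𝔸 1 0 x + DPhi 𝔸 2 3 x - DPhi 𝔸 3 2 x := by
  simp only [curv8, DPhi, pd4, pd8_0, pd8_1, pd8_2, pd8_3, pd8_4, pd8_5, pd8_6, pd8_7,
    aconn0, aconn1, aconn2, aconn3, higgs0, higgs1, higgs2, higgs3,
    (show fderiv ℝ (fun y => -𝔸 5 y) x = -fderiv ℝ (𝔸 5) x from fderiv_fun_neg),
    (show fderiv ℝ (fun y => -𝔸 6 y) x = -fderiv ℝ (𝔸 6) x from fderiv_fun_neg),
    ContinuousLinearMap.neg_apply]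
  noncomm_ring

lemma id5 : curv8 𝔸 0 6 x - curv8 𝔸 1 7 x + curv8 𝔸 2 4 x - curv8 𝔸 3 5 x
    = -DPhi 𝔸 0 2 x - DPhi 𝔸 1 3 x + DPhi 𝔸 2 0 x + DPhi 𝔸 3 1 x := by
  simp only [curv8, DPhi, pd4, pd8_0, pd8_1, pd8_2, pd8_3, pd8_4, pd8_5, pd8_6, pd8_7,
    aconn0, aconn1, aconn2, aconn3, higgs0, higgs1, higgs2, higgs3,
    (show fderiv ℝ (fun y => -𝔸 5 y) x = -fderiv ℝ (𝔸 5) x from fderiv_fun_neg),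
    (show fderiv ℝ (fun y => -𝔸 6 y) x = -fderiv ℝ (𝔸 6) x from fderiv_fun_neg),
    ContinuousLinearMap.neg_apply]
  noncomm_ring

lemma id6 : curv8 𝔸 0 7 x + curv8 𝔸 1 6 x - curv8 𝔸 2 5 x - curv8 𝔸 3 4 x
    = DPhi 𝔸 0 3 x - DPhi 𝔸 1 2 x + DPhi 𝔸 2 1 x - DPhi 𝔸 3 0 x := by
  simp only [curv8, DPhi, pd4, pd8_0, pd8_1, pd8_2, pd8_3, pd8_4, pd8_5, pd8_6, pd8_7,
    aconn0, aconn1, aconn2, aconn3, higgs0, higgs1, higgs2, higgs3,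
    (show fderiv ℝ (fun y => -𝔸 5 y) x = -fderiv ℝ (𝔸 5) x from fderiv_fun_neg),
    (show fderiv ℝ (fun y => -𝔸 6 y) x = -fderiv ℝ (𝔸 6) x from fderiv_fun_neg),
    ContinuousLinearMap.neg_apply]
  noncomm_ring

lemma id7 : curv8 𝔸 0 4 x - curv8 𝔸 1 5 x - curv8 𝔸 2 6 x + curv8 𝔸 3 7 x
    = DPhi 𝔸 0 0 x + DPhi 𝔸 1 1 x + DPhi 𝔸 2 2 x + DPhi 𝔸 3 3 x := by
  simp only [curv8, DPhi, pd4, pd8_0, pd8_1, pd8_2, pd8_3, pd8_4, pd8_5, pd8_6, pd8_7,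
    aconn0, aconn1, aconn2, aconn3, higgs0, higgs1, higgs2, higgs3,
    (show fderiv ℝ (fun y => -𝔸 5 y) x = -fderiv ℝ (𝔸 5) x from fderiv_fun_neg),
    (show fderiv ℝ (fun y => -𝔸 6 y) x = -fderiv ℝ (𝔸 6) x from fderiv_fun_neg),
    ContinuousLinearMap.neg_apply]
  noncomm_ring

end Helpers

/-- Symmetry reduction: the seven Spin(7) self-duality equations for a translation-invariant
connection on ℝ⁸ = ℝ⁴ × ℝ⁴ hold identically iff the non-abelian Seiberg–Witten system
holds on ℝ⁴. -/
theorem spin7_reduction_to_nonabelian_seibergWitten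
    (𝔸 : Fin 8 → EuclideanSpace ℝ (Fin 4) → Matrix (Fin 2) (Fin 2) ℂ)
    (hsmooth : ∀ μ, ContDiff ℝ (⊤ : ℕ∞) (𝔸 μ)) :
    (∀ x : EuclideanSpace ℝ (Fin 4),
      curv8 𝔸 0 1 x + curv8 𝔸 2 3 x + curv8 𝔸 4 5 x + curv8 𝔸 6 7 x = 0 ∧
      curv8 𝔸 0 2 x - curv8 𝔸 1 3 x + curv8 𝔸 4 6 x - curv8 𝔸 5 7 x = 0 ∧
      curv8 𝔸 0 3 x + curv8 𝔸 1 2 x - curv8 𝔸 4 7 x - curv8 𝔸 5 6 x = 0 ∧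
      curv8 𝔸 0 5 x + curv8 𝔸 1 4 x + curv8 𝔸 2 7 x + curv8 𝔸 3 6 x = 0 ∧
      curv8 𝔸 0 6 x - curv8 𝔸 1 7 x + curv8 𝔸 2 4 x - curv8 𝔸 3 5 x = 0 ∧
      curv8 𝔸 0 7 x + curv8 𝔸 1 6 x - curv8 𝔸 2 5 x - curv8 𝔸 3 4 x = 0 ∧
      curv8 𝔸 0 4 x - curv8 𝔸 1 5 x - curv8 𝔸 2 6 x + curv8 𝔸 3 7 x = 0)
    ↔
    (∀ x : EuclideanSpace ℝ (Fin 4),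
      F4 𝔸 0 1 x + F4 𝔸 2 3 x =
        (Higgs 𝔸 0 x * Higgs 𝔸 1 x - Higgs 𝔸 1 x * Higgs 𝔸 0 x)
        + (Higgs 𝔸 2 x * Higgs 𝔸 3 x - Higgs 𝔸 3 x * Higgs 𝔸 2 x) ∧
      F4 𝔸 0 2 x - F4 𝔸 1 3 x =
        (Higgs 𝔸 0 x * Higgs 𝔸 2 x - Higgs 𝔸 2 x * Higgs 𝔸 0 x)
        - (Higgs 𝔸 1 x * Higgs 𝔸 3 x - Higgs 𝔸 3 x * Higgs 𝔸 1 x) ∧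
      F4 𝔸 0 3 x + F4 𝔸 1 2 x =
        (Higgs 𝔸 0 x * Higgs 𝔸 3 x - Higgs 𝔸 3 x * Higgs 𝔸 0 x)
        + (Higgs 𝔸 1 x * Higgs 𝔸 2 x - Higgs 𝔸 2 x * Higgs 𝔸 1 x) ∧
      -DPhi 𝔸 0 1 x + DPhi 𝔸 1 0 x + DPhi 𝔸 2 3 x - DPhi 𝔸 3 2 x = 0 ∧
      -DPhi 𝔸 0 2 x - DPhi 𝔸 1 3 x + DPhi 𝔸 2 0 x + DPhi 𝔸 3 1 x = 0 ∧
      DPhi 𝔸 0 3 x - DPhi 𝔸 1 2 x + DPhi 𝔸 2 1 x - DPhi 𝔸 3 0 x = 0 ∧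
      DPhi 𝔸 0 0 x + DPhi 𝔸 1 1 x + DPhi 𝔸 2 2 x + DPhi 𝔸 3 3 x = 0) := by
  constructor
  · intro h x
    obtain ⟨h1, h2, h3, h4, h5, h6, h7⟩ := h x
    rw [id1] at h1; rw [id2] at h2; rw [id3] at h3
    rw [id4] at h4; rw [id5] at h5; rw [id6] at h6; rw [id7] at h7
    exact ⟨sub_eq_zero.mp h1, sub_eq_zero.mp h2, sub_eq_zero.mp h3, h4, h5, h6, h7⟩
  · intro h x
    obtain ⟨h1, h2, h3, h4, h5, h6, h7⟩ := h x
    refine ⟨?_, ?_, ?_, ?_, ?_, ?_, ?_⟩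
    · rw [id1]; exact sub_eq_zero.mpr h1
    · rw [id2]; exact sub_eq_zero.mpr h2
    · rw [id3]; exact sub_eq_zero.mpr h3
    · rw [id4]; exact h4
    · rw [id5]; exact h5
    · rw [id6]; exact h6
    · rw [id7]; exact h7
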